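/- arXiv:2603.18675 — 3 statements merged into one kernel-verified Lean document; each statement's English description precedes it below -/
import Mathlib

section
/- Let L = { z = x + iy ∈ ℂ² : x, y ∈ ℝ², ∃ u ∈ ℝ², (x·u)² + (y·u)² > |y|²|u|² } and let ℓ : ℂ² → ℂ be ℓ(z) = z·z = z₁² + z₂². Then ℓ⁻¹( ℂ ∖ (−∞, 0] ) = L; that is, for every z ∈ ℂ², z·z is not a nonpositive real number if and only if z ∈ L. -/
noncomputable section

/-- Real scalar product in ℝ². -/
def rdot (x y : Fin 2 → ℝ) : ℝ := ∑ j, x j * y j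

/-- Complex bilinear square `z·z = z₁² + z₂²` (no conjugation). -/
def csq (z : Fin 2 → ℂ) : ℂ := ∑ j, z j * z j

/-- The set of complex numbers that are real and nonpositive, i.e. `(-∞, 0]`. -/
def nonposReal : Set ℂ := {w | ∃ t : ℝ, t ≤ 0 ∧ w = (t : ℂ)}

/-- The Lieb–Sokal cone
`L = {z = x + iy ∈ ℂ² : ∃ u ∈ ℝ², (x·u)² + (y·u)² > |y|²|u|²}`. -/
def LSet : Set (Fin 2 → ℂ) :=
  {z | ∃ u : Fin 2 → ℝ,
    (rdot (fun j => (z j).re) u) ^ 2 + (rdot (fun j => (z j).im) u) ^ 2 >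
      rdot (fun j => (z j).im) (fun j => (z j).im) * rdot u u}

lemma mem_nonposReal (w : ℂ) : w ∈ nonposReal ↔ w.im = 0 ∧ w.re ≤ 0 := by
  constructor
  · rintro ⟨t, ht, rfl⟩; simp [ht]
  · rintro ⟨h1, h2⟩
    exact ⟨w.re, h2, by rw [Complex.ext_iff]; simp [h1]⟩

lemma aux_real (x1 x2 y1 y2 : ℝ) :
    ¬(x1 * y1 + x2 * y2 = 0 ∧ x1 ^ 2 + x2 ^ 2 ≤ y1 ^ 2 + y2 ^ 2) ↔
    ∃ a b : ℝ, (x1 * a + x2 * b) ^ 2 + (y1 * a + y2 * b) ^ 2 >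
      (y1 * y1 + y2 * y2) * (a * a + b * b) := by
  constructor
  · intro h
    by_cases him : x1 * y1 + x2 * y2 = 0
    · have hre : y1 ^ 2 + y2 ^ 2 < x1 ^ 2 + x2 ^ 2 := by
        by_contra hc
        exact h ⟨him, not_lt.1 hc⟩
      exact ⟨x1, x2, by nlinarith [sq_nonneg (x1 * y2 - x2 * y1)]⟩
    · have hpos : 0 < (x1 * y1 + x2 * y2) ^ 2 := by positivity
      exact ⟨y1, y2, by nlinarith⟩
  · rintro ⟨a, b, hu⟩ ⟨h1, h2⟩
    have key : (y1 ^ 2 + y2 ^ 2) * (x1 * a + x2 * b)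
        = (x2 * y1 - x1 * y2) * (y1 * b - y2 * a) := by
      linear_combination (y1 * a + y2 * b) * h1
    have hT : (x2 * y1 - x1 * y2) ^ 2 = (x1 ^ 2 + x2 ^ 2) * (y1 ^ 2 + y2 ^ 2) := by
      linear_combination (-(x1 * y1 + x2 * y2)) * h1
    by_cases hy : y1 ^ 2 + y2 ^ 2 = 0
    · have hy1' : y1 = 0 := by nlinarith [sq_nonneg y1, sq_nonneg y2]
      have hy2' : y2 = 0 := by nlinarith [sq_nonneg y1, sq_nonneg y2]
      have hx1' : x1 = 0 := by nlinarith [sq_nonneg x1, sq_nonneg x2]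
      have hx2' : x2 = 0 := by nlinarith [sq_nonneg x1, sq_nonneg x2]
      rw [hy1', hy2', hx1', hx2'] at hu
      nlinarith [hu]
    · have hy' : 0 < y1 ^ 2 + y2 ^ 2 := lt_of_le_of_ne (by positivity) (Ne.symm hy)
      have hG : (y1 ^ 2 + y2 ^ 2) ^ 2 *
          ((y1 * y1 + y2 * y2) * (a * a + b * b)
            - (x1 * a + x2 * b) ^ 2 - (y1 * a + y2 * b) ^ 2)
          = ((y1 ^ 2 + y2 ^ 2) ^ 2 - (x2 * y1 - x1 * y2) ^ 2) * (y1 * b - y2 * a) ^ 2 := by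
        linear_combination (-((y1 ^ 2 + y2 ^ 2) * (x1 * a + x2 * b) + (x2 * y1 - x1 * y2) * (y1 * b - y2 * a))) * key
      nlinarith [mul_pos hy' hy', sq_nonneg (y1 * b - y2 * a),
        mul_nonneg (mul_nonneg (sub_nonneg.2 h2) hy'.le) (sq_nonneg (y1 * b - y2 * a)), hT]

/-- **`ℓ⁻¹(ℂ ∖ (-∞,0]) = L`:** for `z ∈ ℂ²`, the square `z·z` is not a nonpositive
real number if and only if `z ∈ L`. -/
theorem sq_preimage_slitPlane_eq_LSet :
    ∀ z : Fin 2 → ℂ, csq z ∉ nonposReal ↔ z ∈ LSet := by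
  intro z
  have hcsq : csq z ∈ nonposReal ↔
      ((z 0).re * (z 0).im + (z 1).re * (z 1).im = 0 ∧
        (z 0).re ^ 2 + (z 1).re ^ 2 ≤ (z 0).im ^ 2 + (z 1).im ^ 2) := by
    rw [mem_nonposReal]
    have hre : (csq z).re = (z 0).re * (z 0).re - (z 0).im * (z 0).im
        + ((z 1).re * (z 1).re - (z 1).im * (z 1).im) := by
      simp [csq, Fin.sum_univ_two, Complex.mul_re]
    have him : (csq z).im = (z 0).re * (z 0).im + (z 0).im * (z 0).re
        + ((z 1).re * (z 1).im + (z 1).im * (z 1).re) := by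
      simp [csq, Fin.sum_univ_two, Complex.mul_im]
    rw [hre, him]
    constructor
    · rintro ⟨h1, h2⟩; constructor <;> nlinarith
    · rintro ⟨h1, h2⟩; constructor <;> nlinarith
  have hL : z ∈ LSet ↔ ∃ u : Fin 2 → ℝ,
      ((z 0).re * u 0 + (z 1).re * u 1) ^ 2 + ((z 0).im * u 0 + (z 1).im * u 1) ^ 2 >
        ((z 0).im * (z 0).im + (z 1).im * (z 1).im) * (u 0 * u 0 + u 1 * u 1) := by
    simp [LSet, rdot, Fin.sum_univ_two]
  rw [hcsq, hL]
  rw [aux_real (z 0).re (z 1).re (z 0).im (z 1).im]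
  constructor
  · rintro ⟨a, b, hab⟩
    exact ⟨![a, b], by simpa using hab⟩
  · rintro ⟨u, hu⟩
    exact ⟨u 0, u 1, hu⟩
end
end

section
/- Let L = { z = x + iy ∈ ℂ² : x, y ∈ ℝ², ∃ u ∈ ℝ², (x·u)² + (y·u)² > |y|²|u|² } and define ℓ_{2,2} : ℂ² × ℂ² → ℂ³ by ℓ_{2,2}(z₁, z₂) = (z₁·z₁, z₂·z₂, z₁·z₂). Then ℓ_{2,2}(L × L) = (ℂ ∖ (−∞,0]) × (ℂ ∖ (−∞,0]) × ℂ; that is, a triple (ζ₁, ζ₂, ζ₁₂) ∈ ℂ³ is of the form (z₁², z₂², z₁·z₂) with z₁, z₂ ∈ L if and only if neither ζ₁ nor ζ₂ is a nonpositive real number (with ζ₁₂ arbitrary). -/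
noncomputable section

/-- Complex bilinear pairing `z·w = z₁w₁ + z₂w₂` (no conjugation). -/
def cdot (z w : Fin 2 → ℂ) : ℂ := ∑ j, z j * w j

lemma real_ineq1 (a b c d p q : ℝ) (ht : a*a - c*c + (b*b - d*d) ≤ 0)
    (h2 : a*c + b*d = 0) :
    (a*p+b*q)^2 + (c*p+d*q)^2 ≤ (c*c+d*d)*(p*p+q*q) := by
  rcases eq_or_lt_of_le (show (0:ℝ) ≤ c * c + d * d from
      add_nonneg (mul_self_nonneg c) (mul_self_nonneg d)) with hY | hY
  · have hc0 : c = 0 := by nlinarith [mul_self_nonneg c, mul_self_nonneg d]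
    have hd0 : d = 0 := by nlinarith [mul_self_nonneg c, mul_self_nonneg d]
    have ha0 : a = 0 := by nlinarith [mul_self_nonneg a, mul_self_nonneg b]
    have hb0 : b = 0 := by nlinarith [mul_self_nonneg a, mul_self_nonneg b]
    subst ha0 hb0 hc0 hd0; nlinarith
  · have key : (c*c+d*d)^2 * ((a*p+b*q)^2 + (c*p+d*q)^2 - (c*c+d*d)*(p*p+q*q))
        = (c*c+d*d) * (a*a+b*b-(c*c+d*d)) * (d*p-c*q)^2
          + (a*c+b*d) * ((a*c+b*d)*((c*p+d*q)^2 - (d*p-c*q)^2)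
            + 2*(a*d-b*c)*(c*p+d*q)*(d*p-c*q)) := by ring
    rw [h2] at key
    nlinarith [key, mul_pos hY hY, sq_nonneg (d*p-c*q),
      mul_nonneg (mul_nonneg hY.le (show (0:ℝ) ≤ -(a*a+b*b-(c*c+d*d)) by linarith))
        (sq_nonneg (d*p-c*q))]

lemma real_ineq2 (a b c d : ℝ)
    (h1 : (a*c+b*d)^2 + (c*c+d*d)^2 ≤ (c*c+d*d)*(c*c+d*d))
    (h2 : (a*a+b*b)^2 + (c*a+d*b)^2 ≤ (c*c+d*d)*(a*a+b*b))
    (h3 : (a*d+b*(-c))^2 + (c*d+d*(-c))^2 ≤ (c*c+d*d)*(d*d+(-c)*(-c))) :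
    a*c + b*d = 0 ∧ a*a - c*c + (b*b - d*d) ≤ 0 := by
  have hxy : a * c + b * d = 0 := by nlinarith [sq_nonneg (a*c+b*d)]
  refine ⟨hxy, ?_⟩
  rcases eq_or_lt_of_le (show (0:ℝ) ≤ c * c + d * d from
      add_nonneg (mul_self_nonneg c) (mul_self_nonneg d)) with hY | hY
  · have hc0 : c = 0 := by nlinarith [mul_self_nonneg c, mul_self_nonneg d]
    have hd0 : d = 0 := by nlinarith [mul_self_nonneg c, mul_self_nonneg d]
    subst hc0 hd0
    nlinarith [sq_nonneg (a*a+b*b), sq_nonneg a, sq_nonneg b]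
  · have lag : (a*d-b*c)^2 + (a*c+b*d)^2 = (a*a+b*b)*(c*c+d*d) := by ring
    nlinarith [h3, hxy, hY, lag]

lemma mem_LSet_iff (z : Fin 2 → ℂ) : z ∈ LSet ↔ cdot z z ∉ nonposReal := by
  have hre : (cdot z z).re = (z 0).re * (z 0).re - (z 0).im * (z 0).im
      + ((z 1).re * (z 1).re - (z 1).im * (z 1).im) := by
    simp [cdot, Fin.sum_univ_two, Complex.mul_re]
  have him : (cdot z z).im = ((z 0).re * (z 0).im + (z 0).im * (z 0).re)
      + ((z 1).re * (z 1).im + (z 1).im * (z 1).re) := by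
    simp [cdot, Fin.sum_univ_two, Complex.mul_im]
  constructor
  · rintro ⟨u, hu⟩ ⟨t, ht, hzz⟩
    simp only [rdot, Fin.sum_univ_two] at hu
    have h1 : (z 0).re * (z 0).re - (z 0).im * (z 0).im
        + ((z 1).re * (z 1).re - (z 1).im * (z 1).im) = t := by
      rw [← hre, hzz, Complex.ofReal_re]
    have h2 : (z 0).re * (z 0).im + (z 1).re * (z 1).im = 0 := by
      have := congrArg Complex.im hzz
      rw [him, Complex.ofReal_im] at this
      linarith
    have := real_ineq1 ((z 0).re) ((z 1).re) ((z 0).im) ((z 1).im) (u 0) (u 1)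
      (by linarith) h2
    linarith
  · intro h
    by_contra hz
    apply h
    simp only [LSet, Set.mem_setOf_eq, not_exists, not_lt] at hz
    have h1 := hz (fun j => (z j).im)
    have h2 := hz (fun j => (z j).re)
    have h3 := hz ![(z 1).im, -(z 0).im]
    simp only [rdot, Fin.sum_univ_two, Matrix.cons_val_zero, Matrix.cons_val_one,
      Matrix.head_cons] at h1 h2 h3
    obtain ⟨hxy, hle⟩ := real_ineq2 ((z 0).re) ((z 1).re) ((z 0).im) ((z 1).im)
      (by nlinarith [h1]) (by nlinarith [h2]) (by nlinarith [h3])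
    refine ⟨(z 0).re * (z 0).re - (z 0).im * (z 0).im
      + ((z 1).re * (z 1).re - (z 1).im * (z 1).im), hle, ?_⟩
    apply Complex.ext
    · rw [hre, Complex.ofReal_re]
    · rw [him, Complex.ofReal_im]; linarith
  
lemma exists_sq (w : ℂ) : ∃ a : ℂ, a * a = w := by
  obtain ⟨a, ha⟩ := IsAlgClosed.exists_pow_nat_eq w (n := 2) (by norm_num)
  exact ⟨a, by rw [← ha]; ring⟩

/-- **`ℓ_{2,2}(L × L) = (ℂ ∖ (-∞,0]) × (ℂ ∖ (-∞,0]) × ℂ`:** a triple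
`(ζ₁, ζ₂, ζ₁₂)` arises as `(z₁·z₁, z₂·z₂, z₁·z₂)` with `z₁, z₂ ∈ L` if and only if
neither `ζ₁` nor `ζ₂` is a nonpositive real number (`ζ₁₂` being arbitrary). -/
theorem gram_image_LSet :
    ∀ ζ₁ ζ₂ ζ₁₂ : ℂ,
      (∃ z₁ ∈ LSet, ∃ z₂ ∈ LSet,
        cdot z₁ z₁ = ζ₁ ∧ cdot z₂ z₂ = ζ₂ ∧ cdot z₁ z₂ = ζ₁₂)
        ↔ (ζ₁ ∉ nonposReal ∧ ζ₂ ∉ nonposReal) := by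
  intro ζ₁ ζ₂ ζ₁₂
  constructor
  · rintro ⟨z₁, hz₁, z₂, hz₂, rfl, rfl, -⟩
    exact ⟨(mem_LSet_iff z₁).mp hz₁, (mem_LSet_iff z₂).mp hz₂⟩
  · rintro ⟨h₁, h₂⟩
    obtain ⟨a, ha⟩ := exists_sq ζ₁
    have ha0 : a ≠ 0 := by
      rintro rfl
      exact h₁ ⟨0, le_refl 0, by rw [← ha]; simp⟩
    obtain ⟨bb, hbb⟩ := exists_sq (ζ₂ - (ζ₁₂ / a) * (ζ₁₂ / a))
    have e1 : cdot ![a, 0] ![a, 0] = ζ₁ := by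
      simp [cdot, Fin.sum_univ_two, ha]
    have e2 : cdot ![ζ₁₂ / a, bb] ![ζ₁₂ / a, bb] = ζ₂ := by
      simp only [cdot, Fin.sum_univ_two, Matrix.cons_val_zero, Matrix.cons_val_one,
        Matrix.head_cons]
      rw [hbb]; ring
    have e3 : cdot ![a, 0] ![ζ₁₂ / a, bb] = ζ₁₂ := by
      simp only [cdot, Fin.sum_univ_two, Matrix.cons_val_zero, Matrix.cons_val_one,
        Matrix.head_cons, zero_mul, add_zero]
      rw [mul_comm, div_mul_cancel₀ _ ha0]
    refine ⟨![a, 0], ?_, ![ζ₁₂ / a, bb], ?_, e1, e2, e3⟩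
    · rw [mem_LSet_iff, e1]; exact h₁
    · rw [mem_LSet_iff, e2]; exact h₂
end
end

section
/- Define ℓ_{3,2} : (ℂ²)³ → ℂ⁶ by ℓ_{3,2}(z₁, z₂, z₃) = (ζ₁, ζ₂, ζ₃, ζ₁₂, ζ₁₃, ζ₂₃) where ζ_k = z_k·z_k and ζ_{jk} = z_j·z_k. Then the image of ℓ_{3,2} equals the set M = { (ζ₁, ζ₂, ζ₃, ζ₁₂, ζ₁₃, ζ₂₃) ∈ ℂ⁶ : ζ₁ζ₂ζ₃ + 2ζ₁₂ζ₂₃ζ₁₃ − ζ₁ζ₂₃² − ζ₂ζ₁₃² − ζ₃ζ₁₂² = 0 }, i.e. the vanishing locus of the 3×3 Gram determinant. -/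
noncomputable section

lemma cdot_comm (z w : Fin 2 → ℂ) : cdot z w = cdot w z := by
  simp [cdot, mul_comm]

lemma sqpair (B C D : ℂ) (h : B * C = D ^ 2) :
    ∃ b c : ℂ, b ^ 2 = B ∧ c ^ 2 = C ∧ b * c = D := by
  by_cases hB : B = 0
  · have hD : D = 0 := by
      have h2 : D ^ 2 = 0 := by rw [← h, hB, zero_mul]
      exact pow_eq_zero_iff (two_ne_zero) |>.mp h2
    obtain ⟨c, hc⟩ := IsAlgClosed.exists_pow_nat_eq C (n := 2) (by norm_num)
    exact ⟨0, c, by simp [hB], hc, by simp [hD]⟩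
  · obtain ⟨b, hb⟩ := IsAlgClosed.exists_pow_nat_eq B (n := 2) (by norm_num)
    have hbne : b ≠ 0 := fun hb0 => hB (by rw [← hb, hb0]; ring)
    refine ⟨b, D / b, hb, ?_, by field_simp⟩
    rw [div_pow, hb, ← h, mul_div_cancel_left₀ _ hB]

/-- The key construction when `ζ₁ ≠ 0`. -/
lemma caseA (ζ₁ ζ₂ ζ₃ ζ₁₂ ζ₁₃ ζ₂₃ : ℂ) (h1 : ζ₁ ≠ 0)
    (hdet : ζ₁ * ζ₂ * ζ₃ + 2 * ζ₁₂ * ζ₂₃ * ζ₁₃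
      - ζ₁ * ζ₂₃ ^ 2 - ζ₂ * ζ₁₃ ^ 2 - ζ₃ * ζ₁₂ ^ 2 = 0) :
    ∃ z₁ z₂ z₃ : Fin 2 → ℂ,
      cdot z₁ z₁ = ζ₁ ∧ cdot z₂ z₂ = ζ₂ ∧ cdot z₃ z₃ = ζ₃ ∧
      cdot z₁ z₂ = ζ₁₂ ∧ cdot z₁ z₃ = ζ₁₃ ∧ cdot z₂ z₃ = ζ₂₃ := by
  obtain ⟨s, hs⟩ := IsAlgClosed.exists_pow_nat_eq ζ₁ (n := 2) (by norm_num)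
  have hsne : s ≠ 0 := fun h0 => h1 (by rw [← hs, h0]; ring)
  have hss : s * s = ζ₁ := by rw [← hs]; ring
  have hBC : (ζ₁ * ζ₂ - ζ₁₂ ^ 2) / ζ₁ ^ 2 * ((ζ₁ * ζ₃ - ζ₁₃ ^ 2) / ζ₁ ^ 2)
      = ((ζ₁ * ζ₂₃ - ζ₁₂ * ζ₁₃) / ζ₁ ^ 2) ^ 2 := by
    rw [div_mul_div_comm, div_pow]
    congr 1
    · linear_combination ζ₁ * hdet
    · ring
  obtain ⟨b, c, hb, hc, hbc⟩ := sqpair _ _ _ hBC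
  have hb' : b ^ 2 * ζ₁ ^ 2 = ζ₁ * ζ₂ - ζ₁₂ ^ 2 := by
    rw [hb]; field_simp
  have hc' : c ^ 2 * ζ₁ ^ 2 = ζ₁ * ζ₃ - ζ₁₃ ^ 2 := by
    rw [hc]; field_simp
  have hbc' : b * c * ζ₁ ^ 2 = ζ₁ * ζ₂₃ - ζ₁₂ * ζ₁₃ := by
    rw [hbc]; field_simp
  refine ⟨![s, 0], ![ζ₁₂ / s, b * s], ![ζ₁₃ / s, c * s], ?_, ?_, ?_, ?_, ?_, ?_⟩ <;>
      simp only [cdot, Fin.sum_univ_two, Matrix.cons_val_zero, Matrix.cons_val_one,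
        Matrix.head_cons]
  · linear_combination hs
  · rw [div_mul_div_comm, hss]
    field_simp
    linear_combination hb' + b^2*ζ₁*hs
  · rw [div_mul_div_comm, hss]
    field_simp
    linear_combination hc' + c^2*ζ₁*hs
  · rw [mul_div_assoc', mul_comm, mul_div_assoc, div_self hsne]; ring
  · rw [mul_div_assoc', mul_comm, mul_div_assoc, div_self hsne]; ring
  · rw [div_mul_div_comm, hss]
    field_simp
    linear_combination hbc' + b*c*ζ₁*hs

/-- **Image of the Gram map `ℓ_{3,2}`:** a sextuple `(ζ₁, ζ₂, ζ₃, ζ₁₂, ζ₁₃, ζ₂₃)` arises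
as the Gram entries of a triple of vectors in `ℂ²` if and only if the 3×3 Gram
determinant `ζ₁ζ₂ζ₃ + 2ζ₁₂ζ₂₃ζ₁₃ − ζ₁ζ₂₃² − ζ₂ζ₁₃² − ζ₃ζ₁₂²` vanishes. -/
theorem gram_map_three_two_image :
    ∀ ζ₁ ζ₂ ζ₃ ζ₁₂ ζ₁₃ ζ₂₃ : ℂ,
      (∃ z₁ z₂ z₃ : Fin 2 → ℂ,
        cdot z₁ z₁ = ζ₁ ∧ cdot z₂ z₂ = ζ₂ ∧ cdot z₃ z₃ = ζ₃ ∧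
        cdot z₁ z₂ = ζ₁₂ ∧ cdot z₁ z₃ = ζ₁₃ ∧ cdot z₂ z₃ = ζ₂₃)
        ↔ ζ₁ * ζ₂ * ζ₃ + 2 * ζ₁₂ * ζ₂₃ * ζ₁₃
            - ζ₁ * ζ₂₃ ^ 2 - ζ₂ * ζ₁₃ ^ 2 - ζ₃ * ζ₁₂ ^ 2 = 0 := by
  intro ζ₁ ζ₂ ζ₃ ζ₁₂ ζ₁₃ ζ₂₃
  constructor
  · rintro ⟨z₁, z₂, z₃, rfl, rfl, rfl, rfl, rfl, rfl⟩
    simp only [cdot, Fin.sum_univ_two]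
    ring
  · intro hdet
    by_cases h1 : ζ₁ ≠ 0
    · exact caseA _ _ _ _ _ _ h1 hdet
    by_cases h2 : ζ₂ ≠ 0
    · obtain ⟨w₁, w₂, w₃, a, b2, c2, d, e, f⟩ :=
        caseA ζ₂ ζ₁ ζ₃ ζ₁₂ ζ₂₃ ζ₁₃ h2 (by linear_combination hdet)
      exact ⟨w₂, w₁, w₃, b2, a, c2, by rw [cdot_comm]; exact d, f, e⟩
    by_cases h3 : ζ₃ ≠ 0
    · obtain ⟨w₁, w₂, w₃, a, b2, c2, d, e, f⟩ :=
        caseA ζ₃ ζ₂ ζ₁ ζ₂₃ ζ₁₃ ζ₁₂ h3 (by linear_combination hdet)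
      exact ⟨w₃, w₂, w₁, c2, b2, a,
        by rw [cdot_comm]; exact f, by rw [cdot_comm]; exact e, by rw [cdot_comm]; exact d⟩
    push_neg at h1 h2 h3
    subst h1; subst h2; subst h3
    have hprod : ζ₁₂ * ζ₁₃ * ζ₂₃ = 0 := by linear_combination hdet / 2
    rcases mul_eq_zero.mp hprod with hp | h23
    · rcases mul_eq_zero.mp hp with h12 | h13
      · -- ζ₁₂ = 0
        refine ⟨![ζ₁₃ / 2, ζ₁₃ / 2 * Complex.I], ![ζ₂₃ / 2, ζ₂₃ / 2 * Complex.I],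
          ![1, -Complex.I], ?_, ?_, ?_, ?_, ?_, ?_⟩ <;>
          simp only [cdot, Fin.sum_univ_two, Matrix.cons_val_zero, Matrix.cons_val_one,
            Matrix.head_cons, h12] <;>
          linear_combination (norm := ring_nf) (0 : ℂ) <;>
          simp [Complex.I_sq]
      · -- ζ₁₃ = 0
        refine ⟨![ζ₁₂ / 2, ζ₁₂ / 2 * Complex.I], ![1, -Complex.I],
          ![ζ₂₃ / 2, ζ₂₃ / 2 * Complex.I], ?_, ?_, ?_, ?_, ?_, ?_⟩ <;>
          simp only [cdot, Fin.sum_univ_two, Matrix.cons_val_zero, Matrix.cons_val_one,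
            Matrix.head_cons, h13] <;>
          linear_combination (norm := ring_nf) (0 : ℂ) <;>
          simp [Complex.I_sq]
    · -- ζ₂₃ = 0
      refine ⟨![1, -Complex.I], ![ζ₁₂ / 2, ζ₁₂ / 2 * Complex.I],
        ![ζ₁₃ / 2, ζ₁₃ / 2 * Complex.I], ?_, ?_, ?_, ?_, ?_, ?_⟩ <;>
        simp only [cdot, Fin.sum_univ_two, Matrix.cons_val_zero, Matrix.cons_val_one,
          Matrix.head_cons, h23] <;>
        linear_combination (norm := ring_nf) (0 : ℂ) <;>
        simp [Complex.I_sq]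
end
end
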